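/- Let T be the operator on ℓ²(ℕ) given by T(x₁,x₂,x₃,…) = (x₂,0,0,…). Then σ(T) = σ_a(T) = σ_w(T) = σ_uw(T) = Π_a(T) = Π(T) = {0} and σ_ubw(T) = ∅. Consequently T satisfies property (gb) but satisfies neither property (UW_Π) nor property (Z_{Π_a}). -/

import Mathlib

namespace OpSpec

variable {X : Type*} [NormedAddCommGroup X] [NormedSpace ℂ X]

noncomputable section

/-- α(S): the dimension of the kernel of `S`. -/
def alpha (S : X →L[ℂ] X) : Cardinal := Module.rank ℂ (LinearMap.ker (S : X →ₗ[ℂ] X))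

/-- β(S): the codimension of the range of `S`. -/
def beta (S : X →L[ℂ] X) : Cardinal := Module.rank ℂ (X ⧸ LinearMap.range (S : X →ₗ[ℂ] X))

/-- `S` is bounded below (injective with closed range). -/
def boundedBelow (S : X →L[ℂ] X) : Prop := ∃ c > 0, ∀ x : X, c * ‖x‖ ≤ ‖S x‖

/-- finite ascent: p(S) < ∞. -/
def finAsc (S : X →L[ℂ] X) : Prop :=
  ∃ n : ℕ, LinearMap.ker (((S ^ n) : X →L[ℂ] X) : X →ₗ[ℂ] X) = LinearMap.ker (((S ^ (n + 1)) : X →L[ℂ] X) : X →ₗ[ℂ] X)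

/-- finite descent: q(S) < ∞. -/
def finDesc (S : X →L[ℂ] X) : Prop :=
  ∃ n : ℕ, LinearMap.range (((S ^ n) : X →L[ℂ] X) : X →ₗ[ℂ] X) = LinearMap.range (((S ^ (n + 1)) : X →L[ℂ] X) : X →ₗ[ℂ] X)

/-- upper semi-Weyl operator: upper semi-Fredholm with index ≤ 0. -/
def isUSW (S : X →L[ℂ] X) : Prop :=
  alpha S < Cardinal.aleph0 ∧ IsClosed (LinearMap.range (S : X →ₗ[ℂ] X) : Set X) ∧ alpha S ≤ beta S

/-- Weyl operator: Fredholm with index 0. -/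
def isWeyl (S : X →L[ℂ] X) : Prop :=
  alpha S < Cardinal.aleph0 ∧ beta S < Cardinal.aleph0 ∧
    IsClosed (LinearMap.range (S : X →ₗ[ℂ] X) : Set X) ∧ alpha S = beta S

/-- left Drazin invertible: finite ascent p with R(S^{p+1}) closed. -/
def isLD (S : X →L[ℂ] X) : Prop :=
  ∃ p : ℕ, LinearMap.ker (((S ^ p) : X →L[ℂ] X) : X →ₗ[ℂ] X) = LinearMap.ker (((S ^ (p + 1)) : X →L[ℂ] X) : X →ₗ[ℂ] X) ∧
    IsClosed (LinearMap.range (((S ^ (p + 1)) : X →L[ℂ] X) : X →ₗ[ℂ] X) : Set X)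

/-- upper semi-Weyl condition for a (not necessarily continuous) linear map. -/
def uswLin {Y : Type*} [NormedAddCommGroup Y] [Module ℂ Y] (S : Y →ₗ[ℂ] Y) : Prop :=
  Module.rank ℂ (LinearMap.ker S) < Cardinal.aleph0 ∧
    IsClosed (LinearMap.range S : Set Y) ∧
    Module.rank ℂ (LinearMap.ker S) ≤ Module.rank ℂ (Y ⧸ LinearMap.range S)

/-- upper semi-B-Weyl: for some n, R(S^n) is closed and the restriction of S to R(S^n)
is upper semi-Weyl. -/
def isUSBW (S : X →L[ℂ] X) : Prop :=
  ∃ n : ℕ, IsClosed (LinearMap.range (((S ^ n) : X →L[ℂ] X) : X →ₗ[ℂ] X) : Set X) ∧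
    ∀ h : ∀ x ∈ LinearMap.range (((S ^ n) : X →L[ℂ] X) : X →ₗ[ℂ] X), (S : X →ₗ[ℂ] X) x ∈ LinearMap.range (((S ^ n) : X →L[ℂ] X) : X →ₗ[ℂ] X),
      uswLin ((S : X →ₗ[ℂ] X).restrict h)

variable (T : X →L[ℂ] X)

/-- the spectrum σ(T). -/
def spec : Set ℂ := spectrum ℂ T

/-- the approximate point spectrum σ_a(T). -/
def specA : Set ℂ := {l | ¬ boundedBelow (T - l • 1)}

/-- the point spectrum (eigenvalues) σ_p(T). -/
def specP : Set ℂ := {l | ∃ x : X, x ≠ 0 ∧ T x = l • x}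

/-- the Weyl spectrum σ_w(T). -/
def specW : Set ℂ := {l | ¬ isWeyl (T - l • 1)}

/-- the upper semi-Weyl spectrum σ_uw(T). -/
def specUW : Set ℂ := {l | ¬ isUSW (T - l • 1)}

/-- the upper semi-B-Weyl spectrum σ_ubw(T). -/
def specUBW : Set ℂ := {l | ¬ isUSBW (T - l • 1)}

/-- the left Drazin spectrum σ_ld(T). -/
def specLD : Set ℂ := {l | ¬ isLD (T - l • 1)}

/-- the Drazin spectrum σ_d(T). -/
def specD : Set ℂ := {l | ¬ (finAsc (T - l • 1) ∧ finDesc (T - l • 1))}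

/-- the Browder spectrum σ_b(T). -/
def specB : Set ℂ :=
  {l | ¬ (alpha (T - l • 1) < Cardinal.aleph0 ∧ beta (T - l • 1) < Cardinal.aleph0 ∧
      IsClosed (LinearMap.range (((T - l • 1) : X →L[ℂ] X) : X →ₗ[ℂ] X) : Set X) ∧
      finAsc (T - l • 1) ∧ finDesc (T - l • 1))}

/-- isolated points of a subset of ℂ. -/
def isoPts (A : Set ℂ) : Set ℂ := {l ∈ A | ∃ U ∈ nhds l, U ∩ A = {l}}

/-- Π(T): the poles of T. -/
def poles : Set ℂ := {l ∈ spec T | finAsc (T - l • 1) ∧ finDesc (T - l • 1)}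

/-- Π⁰(T): poles of finite rank. -/
def poles0 : Set ℂ := {l ∈ poles T | alpha (T - l • 1) < Cardinal.aleph0}

/-- Π_a(T): the left poles of T. -/
def lpoles : Set ℂ := {l ∈ specA T | isLD (T - l • 1)}

/-- Π_a⁰(T): left poles of finite rank. -/
def lpoles0 : Set ℂ := {l ∈ lpoles T | alpha (T - l • 1) < Cardinal.aleph0}

/-- E(T) = iso σ(T) ∩ σ_p(T). -/
def setE : Set ℂ := isoPts (spec T) ∩ specP T

/-- E⁰(T): isolated eigenvalues of σ(T) of finite multiplicity. -/
def setE0 : Set ℂ := {l ∈ setE T | alpha (T - l • 1) < Cardinal.aleph0}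

/-- E_a(T) = iso σ_a(T) ∩ σ_p(T). -/
def setEa : Set ℂ := isoPts (specA T) ∩ specP T

/-- E_a⁰(T): isolated eigenvalues of σ_a(T) of finite multiplicity. -/
def setEa0 : Set ℂ := {l ∈ setEa T | alpha (T - l • 1) < Cardinal.aleph0}

/-- property (UW_Π): σ_a(T) \ σ_uw(T) = Π(T). -/
def propUWPi : Prop := specA T \ specUW T = poles T

/-- property (UW_E): σ_a(T) \ σ_uw(T) = E(T). -/
def propUWE : Prop := specA T \ specUW T = setE T

/-- property (UW_{E_a}): σ_a(T) \ σ_uw(T) = E_a(T). -/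
def propUWEa : Prop := specA T \ specUW T = setEa T

/-- property (Z_{Π_a}): σ(T) \ σ_w(T) = Π_a(T). -/
def propZPia : Prop := spec T \ specW T = lpoles T

/-- property (Z_{E_a}): σ(T) \ σ_w(T) = E_a(T). -/
def propZEa : Prop := spec T \ specW T = setEa T

/-- property (gb): σ_a(T) \ σ_ubw(T) = Π(T). -/
def propGb : Prop := specA T \ specUBW T = poles T

/-- a-Browder's theorem: σ_a(T) \ σ_uw(T) = Π_a⁰(T). -/
def aBrowder : Prop := specA T \ specUW T = lpoles0 T

end
end OpSpec

open OpSpec Cardinal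

noncomputable abbrev ell2 : Type := lp (fun _ : ℕ => ℂ) 2


section AuxLemmas

open OpSpec

variable {X : Type*} [NormedAddCommGroup X] [NormedSpace ℂ X]

lemma Aux.nil_unit {S : X →L[ℂ] X} (hSS : S * S = 0) {l : ℂ} (hl : l ≠ 0) :
    IsUnit (S - l • 1) := by
  refine ⟨⟨S - l • 1, (-(l⁻¹*l⁻¹)) • S + (-l⁻¹) • (1 : X →L[ℂ] X), ?_, ?_⟩, rfl⟩ <;>
  · simp only [sub_mul, mul_add, add_mul, mul_sub, smul_mul_assoc, mul_smul_comm, smul_smul,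
      one_mul, mul_one, hSS, smul_zero, smul_sub, smul_add, zero_sub, sub_neg_eq_add, zero_add,
      smul_neg, neg_smul, neg_neg, mul_neg, neg_mul]
    match_scalars <;> field_simp <;> ring

lemma Aux.unit_ker {S : X →L[ℂ] X} (h : IsUnit S) : LinearMap.ker (S : X →ₗ[ℂ] X) = ⊥ := by
  obtain ⟨u, rfl⟩ := h
  ext x
  simp only [LinearMap.mem_ker, Submodule.mem_bot]
  constructor
  · intro hx
    have : ((↑u⁻¹ * ↑u : X →L[ℂ] X)) x = x := by rw [u.inv_mul]; rfl
    rw [ContinuousLinearMap.mul_apply, show (u : X →L[ℂ] X) x = 0 from hx, map_zero] at this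
    exact this.symm
  · rintro rfl; exact map_zero _

lemma Aux.unit_range {S : X →L[ℂ] X} (h : IsUnit S) : LinearMap.range (S : X →ₗ[ℂ] X) = ⊤ := by
  obtain ⟨u, rfl⟩ := h
  rw [LinearMap.range_eq_top]
  intro y
  refine ⟨(↑u⁻¹ : X →L[ℂ] X) y, ?_⟩
  have : ((↑u * ↑u⁻¹ : X →L[ℂ] X)) y = y := by rw [u.mul_inv]; rfl
  rwa [ContinuousLinearMap.mul_apply] at this

lemma Aux.unit_inj {S : X →L[ℂ] X} (h : IsUnit S) : Function.Injective S := by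
  intro a b hab
  have hm : a - b ∈ LinearMap.ker (S : X →ₗ[ℂ] X) := by simp [LinearMap.mem_ker, map_sub, hab]
  rw [Aux.unit_ker h, Submodule.mem_bot, sub_eq_zero] at hm
  exact hm

lemma Aux.unit_alpha {S : X →L[ℂ] X} (h : IsUnit S) : alpha S = 0 := by
  rw [alpha, Aux.unit_ker h, rank_bot]

lemma Aux.unit_beta {S : X →L[ℂ] X} (h : IsUnit S) : beta S = 0 := by
  rw [beta, Aux.unit_range h]
  haveI : Subsingleton (X ⧸ (⊤ : Submodule ℂ X)) :=
    Submodule.Quotient.subsingleton_iff.mpr rfl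
  exact rank_subsingleton' _ _

lemma Aux.unit_range_closed {S : X →L[ℂ] X} (h : IsUnit S) :
    IsClosed (LinearMap.range (S : X →ₗ[ℂ] X) : Set X) := by
  rw [Aux.unit_range h, Submodule.top_coe]
  exact isClosed_univ

lemma Aux.unit_isWeyl {S : X →L[ℂ] X} (h : IsUnit S) : isWeyl S := by
  refine ⟨?_, ?_, Aux.unit_range_closed h, ?_⟩ <;>
    simp [Aux.unit_alpha h, Aux.unit_beta h, Cardinal.aleph0_pos]

lemma Aux.unit_isUSW {S : X →L[ℂ] X} (h : IsUnit S) : isUSW S := by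
  refine ⟨?_, Aux.unit_range_closed h, ?_⟩ <;>
    simp [Aux.unit_alpha h, Aux.unit_beta h, Cardinal.aleph0_pos]

lemma Aux.unit_boundedBelow [Nontrivial X] {S : X →L[ℂ] X} (h : IsUnit S) : boundedBelow S := by
  obtain ⟨u, rfl⟩ := h
  have hinv : (↑u⁻¹ : X →L[ℂ] X) ≠ 0 := by
    intro h0
    have h1 : ((↑u⁻¹ * ↑u : X →L[ℂ] X)) = 1 := u.inv_mul
    rw [h0, zero_mul] at h1
    exact one_ne_zero h1.symm
  have hn : 0 < ‖(↑u⁻¹ : X →L[ℂ] X)‖ := norm_pos_iff.mpr hinv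
  refine ⟨‖(↑u⁻¹ : X →L[ℂ] X)‖⁻¹, inv_pos.mpr hn, fun x => ?_⟩
  have hx : ‖x‖ ≤ ‖(↑u⁻¹ : X →L[ℂ] X)‖ * ‖(↑u : X →L[ℂ] X) x‖ := by
    have h1 : ((↑u⁻¹ * ↑u : X →L[ℂ] X)) x = x := by rw [u.inv_mul]; rfl
    calc ‖x‖ = ‖(↑u⁻¹ : X →L[ℂ] X) ((↑u : X →L[ℂ] X) x)‖ := by
          rw [← ContinuousLinearMap.mul_apply, h1]
      _ ≤ _ := ContinuousLinearMap.le_opNorm _ _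
  rw [inv_mul_le_iff₀ hn]
  linarith [hx]

lemma Aux.unit_isUSBW {S : X →L[ℂ] X} (h : IsUnit S) : isUSBW S := by
  refine ⟨0, ?_, ?_⟩
  · rw [pow_zero]
    have h1 : LinearMap.range (((1 : X →L[ℂ] X)) : X →ₗ[ℂ] X) = ⊤ :=
      LinearMap.range_eq_top.mpr (fun y => ⟨y, rfl⟩)
    rw [h1, Submodule.top_coe]; exact isClosed_univ
  · intro hmem
    have htop : LinearMap.range (((S ^ 0 : X →L[ℂ] X)) : X →ₗ[ℂ] X) = ⊤ := by
      rw [pow_zero]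
      exact LinearMap.range_eq_top.mpr (fun y => ⟨y, rfl⟩)
    have hkerbot : LinearMap.ker ((S : X →ₗ[ℂ] X).restrict hmem) = ⊥ := by
      ext x
      simp only [LinearMap.mem_ker, Submodule.mem_bot]
      constructor
      · intro hx
        have h1 : S (x : X) = 0 := congrArg Subtype.val hx
        have h2 : S (x : X) = S 0 := by simpa using h1
        exact Subtype.ext (Aux.unit_inj h h2)
      · rintro rfl; simp [LinearMap.restrict_apply]
    have hrtop : LinearMap.range ((S : X →ₗ[ℂ] X).restrict hmem) = ⊤ := by
      rw [LinearMap.range_eq_top]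
      rintro ⟨y, hy⟩
      obtain ⟨x, hx⟩ := LinearMap.range_eq_top.mp (Aux.unit_range h) y
      exact ⟨⟨x, htop ▸ Submodule.mem_top⟩, Subtype.ext hx⟩
    refine ⟨?_, ?_, ?_⟩
    · rw [hkerbot, rank_bot]; exact Cardinal.aleph0_pos
    · rw [hrtop, Submodule.top_coe]; exact isClosed_univ
    · rw [hkerbot, rank_bot]; exact zero_le

lemma Aux.isClosed_of_subsingleton {Y : Type*} [TopologicalSpace Y] [Subsingleton Y]
    (s : Set Y) : IsClosed s := by
  rcases s.eq_empty_or_nonempty with rfl | ⟨y, hy⟩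
  · exact isClosed_empty
  · have h1 : s = Set.univ := Set.eq_univ_of_forall fun z => (Subsingleton.elim y z) ▸ hy
    rw [h1]; exact isClosed_univ

lemma Aux.range_zero_clm : LinearMap.range ((0 : X →L[ℂ] X) : X →ₗ[ℂ] X) = ⊥ := by
  ext x; simp [eq_comm]

variable {S : X →L[ℂ] X} (hSS : S * S = 0)
include hSS

lemma Aux.nil_sq : S ^ 2 = 0 := by rw [pow_two, hSS]

lemma Aux.nil_cube : S ^ 3 = 0 := by rw [pow_succ, Aux.nil_sq hSS, zero_mul]

lemma Aux.nil_finAsc : finAsc S := ⟨2, by rw [Aux.nil_sq hSS, Aux.nil_cube hSS]⟩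

lemma Aux.nil_finDesc : finDesc S := ⟨2, by rw [Aux.nil_sq hSS, Aux.nil_cube hSS]⟩

lemma Aux.nil_isLD : isLD S := by
  refine ⟨2, by rw [Aux.nil_sq hSS, Aux.nil_cube hSS], ?_⟩
  rw [Aux.nil_cube hSS, Aux.range_zero_clm, Submodule.bot_coe]
  exact isClosed_singleton

lemma Aux.nil_isUSBW : isUSBW S := by
  have hbot : LinearMap.range (((S ^ 2 : X →L[ℂ] X)) : X →ₗ[ℂ] X) = ⊥ := by rw [Aux.nil_sq hSS, Aux.range_zero_clm]
  refine ⟨2, by rw [hbot, Submodule.bot_coe]; exact isClosed_singleton, ?_⟩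
  intro hmem
  haveI : Subsingleton (LinearMap.range (((S ^ 2 : X →L[ℂ] X)) : X →ₗ[ℂ] X)) := by
    constructor
    rintro ⟨a, ha⟩ ⟨b, hb⟩
    rw [hbot, Submodule.mem_bot] at ha hb
    exact Subtype.ext (ha.trans hb.symm)
  refine ⟨?_, Aux.isClosed_of_subsingleton _, ?_⟩
  · rw [rank_subsingleton']; exact Cardinal.aleph0_pos
  · rw [rank_subsingleton']; exact zero_le

end AuxLemmas

section Aux2

/-- coercion of ell2 into functions as a linear map -/
noncomputable def Aux.coeLM : ell2 →ₗ[ℂ] (ℕ → ℂ) where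
  toFun f := ⇑f
  map_add' f g := lp.coeFn_add f g
  map_smul' c f := lp.coeFn_smul c f

/-- standard basis vectors of ell2 -/
noncomputable def Aux.e (k : ℕ) : ell2 := lp.single 2 k 1

lemma Aux.e_apply_self (k : ℕ) : Aux.e k k = 1 := lp.single_apply_self 2 k 1

lemma Aux.e_apply_ne {k j : ℕ} (h : j ≠ k) : Aux.e k j = 0 := lp.single_apply_ne 2 k 1 h

lemma Aux.e_ne_zero (k : ℕ) : Aux.e k ≠ 0 := by
  intro h
  have h1 := Aux.e_apply_self k
  rw [h] at h1
  simp at h1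

variable (T : ell2 →L[ℂ] ell2)
    (hT0 : ∀ x : ell2, T x 0 = x 1) (hTs : ∀ (x : ell2) (n : ℕ), T x (n + 1) = 0)

include hT0 hTs in
lemma Aux.T_e (k : ℕ) (hk : k ≠ 1) : T (Aux.e k) = 0 := by
  ext n
  cases n with
  | zero => rw [hT0]; simp [Aux.e_apply_ne (show (1:ℕ) ≠ k from fun h => hk h.symm)]
  | succ n => simp [hTs]

include hT0 hTs in
lemma Aux.T_sq : T * T = 0 := by
  ext x n
  cases n with
  | zero => simp [ContinuousLinearMap.mul_apply, hT0, hTs]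
  | succ n => simp [ContinuousLinearMap.mul_apply, hTs]

include hT0 hTs in
lemma Aux.alpha_T_infinite : Cardinal.aleph0 ≤ Module.rank ℂ (LinearMap.ker (T : ell2 →ₗ[ℂ] ell2)) := by
  have hmem : ∀ n : ℕ, Aux.e (n + 2) ∈ LinearMap.ker (T : ell2 →ₗ[ℂ] ell2) := by
    intro n
    rw [LinearMap.mem_ker]
    exact Aux.T_e T hT0 hTs (n + 2) (by omega)
  set v : ℕ → LinearMap.ker (T : ell2 →ₗ[ℂ] ell2) := fun n => ⟨Aux.e (n + 2), hmem n⟩ with hv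
  have hind : LinearIndependent ℂ v := by
    have hcomp : LinearIndependent ℂ
        (fun n : ℕ => Aux.coeLM ((LinearMap.ker (T : ell2 →ₗ[ℂ] ell2)).subtype (v n))) := by
      rw [linearIndependent_iff']
      intro s g hsum i hi
      have h1 := congrFun hsum (i + 2)
      simp only [Finset.sum_apply, Pi.smul_apply, Pi.zero_apply] at h1
      rw [Finset.sum_eq_single i] at h1
      · simpa [Aux.coeLM, hv, Aux.e_apply_self, smul_eq_mul] using h1
      · intro j hj hji
        have h2 : (i + 2) ≠ (j + 2) := by omega
        simp [Aux.coeLM, hv, Aux.e_apply_ne h2]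
      · intro h; exact absurd hi h
    exact hcomp.of_comp (Aux.coeLM ∘ₗ (LinearMap.ker (T : ell2 →ₗ[ℂ] ell2)).subtype)
  simpa using hind.aleph0_le_rank

end Aux2

theorem stmt13 (T : ell2 →L[ℂ] ell2)
    (hT0 : ∀ x : ell2, T x 0 = x 1) (hTs : ∀ (x : ell2) (n : ℕ), T x (n + 1) = 0) :
    spec T = {0} ∧ specA T = {0} ∧ specW T = {0} ∧ specUW T = {0} ∧
      lpoles T = {0} ∧ poles T = {0} ∧ specUBW T = ∅ ∧
      propGb T ∧ ¬ propUWPi T ∧ ¬ propZPia T := by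
  haveI : Nontrivial ell2 := ⟨⟨Aux.e 0, 0, Aux.e_ne_zero 0⟩⟩
  have hTT : T * T = 0 := Aux.T_sq T hT0 hTs
  have hTe0 : T (Aux.e 0) = 0 := Aux.T_e T hT0 hTs 0 (by omega)
  have hsub0 : T - (0 : ℂ) • (1 : ell2 →L[ℂ] ell2) = T := by simp
  -- units away from 0
  have hu : ∀ l : ℂ, l ≠ 0 → IsUnit (T - l • 1) := fun l hl => Aux.nil_unit hTT hl
  -- T itself is not injective
  have hnotinj : ¬ Function.Injective T := by
    intro hinj
    exact Aux.e_ne_zero 0 (hinj (by rw [hTe0, map_zero]))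
  -- spec T = {0}
  have hspec : spec T = {0} := by
    ext l
    simp only [Set.mem_singleton_iff, spec, spectrum.mem_iff]
    constructor
    · intro h
      by_contra hl
      apply h
      have h1 := (hu l hl).neg
      rw [neg_sub] at h1
      rwa [Algebra.algebraMap_eq_smul_one]
    · rintro rfl
      rw [map_zero, zero_sub]
      intro h
      exact hnotinj fun a b hab => Aux.unit_inj h (show (-T) a = (-T) b by simp [hab])
  -- specA T = {0}
  have hspecA : specA T = {0} := by
    ext l
    simp only [Set.mem_singleton_iff, specA, Set.mem_setOf_eq]
    constructor
    · intro h
      by_contra hl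
      exact h (Aux.unit_boundedBelow (hu l hl))
    · rintro rfl
      rw [hsub0]
      rintro ⟨c, hc, hb⟩
      have h1 := hb (Aux.e 0)
      rw [hTe0, norm_zero] at h1
      have h2 : 0 < ‖Aux.e 0‖ := norm_pos_iff.mpr (Aux.e_ne_zero 0)
      nlinarith
  -- alpha T is infinite
  have halpha : ¬ alpha T < Cardinal.aleph0 :=
    not_lt.mpr (Aux.alpha_T_infinite T hT0 hTs)
  -- specW T = {0}
  have hspecW : specW T = {0} := by
    ext l
    simp only [Set.mem_singleton_iff, specW, Set.mem_setOf_eq]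
    constructor
    · intro h
      by_contra hl
      exact h (Aux.unit_isWeyl (hu l hl))
    · rintro rfl
      rw [hsub0]
      intro h
      exact halpha h.1
  -- specUW T = {0}
  have hspecUW : specUW T = {0} := by
    ext l
    simp only [Set.mem_singleton_iff, specUW, Set.mem_setOf_eq]
    constructor
    · intro h
      by_contra hl
      exact h (Aux.unit_isUSW (hu l hl))
    · rintro rfl
      rw [hsub0]
      intro h
      exact halpha h.1
  -- lpoles T = {0}
  have hlpoles : lpoles T = {0} := by
    ext l
    simp only [Set.mem_singleton_iff, lpoles, Set.mem_setOf_eq, hspecA]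
    constructor
    · rintro ⟨h1, _⟩; exact h1
    · rintro rfl
      refine ⟨rfl, ?_⟩
      rw [hsub0]
      exact Aux.nil_isLD hTT
  -- poles T = {0}
  have hpoles : poles T = {0} := by
    ext l
    simp only [Set.mem_singleton_iff, poles, Set.mem_setOf_eq, hspec]
    constructor
    · rintro ⟨h1, _⟩; exact h1
    · rintro rfl
      refine ⟨rfl, ?_⟩
      rw [hsub0]
      exact ⟨Aux.nil_finAsc hTT, Aux.nil_finDesc hTT⟩
  -- specUBW T = ∅
  have hspecUBW : specUBW T = ∅ := by
    rw [Set.eq_empty_iff_forall_notMem]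
    intro l hl
    apply hl
    by_cases h0 : l = 0
    · subst h0
      rw [hsub0]
      exact Aux.nil_isUSBW hTT
    · exact Aux.unit_isUSBW (hu l h0)
  refine ⟨hspec, hspecA, hspecW, hspecUW, hlpoles, hpoles, hspecUBW, ?_, ?_, ?_⟩
  · rw [propGb, hspecA, hspecUBW, hpoles, Set.diff_empty]
  · rw [propUWPi, hspecA, hspecUW, hpoles, Set.diff_self]
    intro h
    exact (Set.singleton_ne_empty (0 : ℂ)) h.symm
  · rw [propZPia, hspec, hspecW, hlpoles, Set.diff_self]
    intro h
    exact (Set.singleton_ne_empty (0 : ℂ)) h.symm
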